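/- Assume (A2), (A4) and (A5). Let σ, τ ∈ 𝒮* be words whose concatenation σ∗τ belongs to 𝒮*, and let s > 0. Then (p̲·s̲^r·χ̄^{−1})^s·ℰ_r(σ)^s·ℰ_r(τ)^s ≤ ℰ_r(σ∗τ)^s ≤ (p̄·s̄^r·χ̲^{−1})^s·ℰ_r(σ)^s·ℰ_r(τ)^s, where p̲ = min_{(i,j)∈G₂}p_{i,j}, p̄ = max_{(i,j)∈G₂}p_{i,j}, s̲ = min_{(i,j)∈𝒮₂}s_{i,j}, s̄ = max_{(i,j)∈𝒮₂}s_{i,j}, χ̲ = min_{1≤i≤2N}χ_i, χ̄ = max_{1≤i≤2N}χ_i. -/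

import Mathlib

open scoped Classical ENNReal
open Filter MeasureTheory

noncomputable section

namespace MTM

/-- the edge relation of the directed graph `𝒢`: `(i,j) ∈ G₂ ↔ p i j > 0`. -/
def edge (p : ℕ → ℕ → ℝ) (i j : ℕ) : Prop := 0 < p i j

/-- product of transition weights along a word. -/
def pword (p : ℕ → ℕ → ℝ) : List ℕ → ℝ
  | [] => 1
  | [_] => 1
  | a :: b :: t => p a b * pword p (b :: t)

/-- product of contraction ratios along a word. -/
def sword (sr : ℕ → ℕ → ℝ) : List ℕ → ℝ
  | [] => 1
  | [_] => 1
  | a :: b :: t => sr a b * sword sr (b :: t)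

/-- `𝒯(σ)`: all lifts of a word, each letter `i` may be replaced by `i + N`. -/
def lifts (N : ℕ) : List ℕ → Finset (List ℕ)
  | [] => {[]}
  | i :: t => (lifts N t).biUnion fun l => {i :: l, (i + N) :: l}

/-- `Γ(σ) = G_n ∩ 𝒯(σ)`. -/
def Gam (p : ℕ → ℕ → ℝ) (N : ℕ) (σ : List ℕ) : Finset (List ℕ) :=
  (lifts N σ).filter fun τ => τ.Chain' (edge p)

/-- words over the alphabet `Ψ = {1,…,N}`. -/
def isPsiWord (N : ℕ) (σ : List ℕ) : Prop :=
  σ ≠ [] ∧ ∀ x ∈ σ, x ∈ Finset.Icc 1 N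

/-- `σ ∈ 𝒮_*`: a `Ψ`-word having at least one admissible lift. -/
def isSword (p : ℕ → ℕ → ℝ) (N : ℕ) (σ : List ℕ) : Prop :=
  isPsiWord N σ ∧ (Gam p N σ).Nonempty

/-- `σ ∈ G_*`: admissible words over `Ω = {1,…,2N}`. -/
def isGword (p : ℕ → ℕ → ℝ) (N : ℕ) (σ : List ℕ) : Prop :=
  σ ≠ [] ∧ (∀ x ∈ σ, x ∈ Finset.Icc 1 (2 * N)) ∧ σ.Chain' (edge p)

/-- `σ ∈ H₁^*`: admissible words with all letters in `Ψ`. -/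
def isH1word (p : ℕ → ℕ → ℝ) (N : ℕ) (σ : List ℕ) : Prop :=
  σ ≠ [] ∧ (∀ x ∈ σ, x ∈ Finset.Icc 1 N) ∧ σ.Chain' (edge p)

/-- `σ ∈ H₂^*`: admissible words with all letters in `Υ = {N+1,…,2N}`. -/
def isH2word (p : ℕ → ℕ → ℝ) (N : ℕ) (σ : List ℕ) : Prop :=
  σ ≠ [] ∧ (∀ x ∈ σ, x ∈ Finset.Icc (N + 1) (2 * N)) ∧ σ.Chain' (edge p)

/-- `μ(J_σ) = Σ_{σ̃ ∈ Γ(σ)} χ_{σ̃₁} p_{σ̃}`. -/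
def muJ (p : ℕ → ℕ → ℝ) (χ : ℕ → ℝ) (N : ℕ) (σ : List ℕ) : ℝ :=
  ∑ τ ∈ Gam p N σ, χ (τ.headD 0) * pword p τ

/-- `ℰ_r(σ) = μ(J_σ) s_σ^r`, with `ℰ_r(θ) = 1` for the empty word. -/
def Er (p : ℕ → ℕ → ℝ) (χ : ℕ → ℝ) (sr : ℕ → ℕ → ℝ) (N : ℕ) (r : ℝ) (σ : List ℕ) : ℝ :=
  if σ = [] then 1 else muJ p χ N σ * sword sr σ ^ r

/-- `I_{1,σ}` resp. `I_{2,σ}`: the part of `μ(J_σ)` coming from lifts ending with `i`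
(resp. with `i⁺`, when applied with `i + N`). -/
def Ipart (p : ℕ → ℕ → ℝ) (χ : ℕ → ℝ) (N : ℕ) (i : ℕ) (σ : List ℕ) : ℝ :=
  ∑ τ ∈ (Gam p N σ).filter (fun τ => τ.getLastD 0 = i), χ (τ.headD 0) * pword p τ

/-- all words of a given length over a finite alphabet. -/
def wordsOfLen (S : Finset ℕ) : ℕ → Finset (List ℕ)
  | 0 => {[]}
  | n + 1 => (wordsOfLen S n).biUnion fun l => S.image fun a => a :: l

/-- `𝒮_n` as a finite set of words. -/
def Sn (p : ℕ → ℕ → ℝ) (N n : ℕ) : Finset (List ℕ) :=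
  (wordsOfLen (Finset.Icc 1 N) n).filter (isSword p N)

/-- irreducibility of the sub-matrix of `p` indexed by `S`: the corresponding directed
graph is strongly connected. -/
def irreducibleOn (p : ℕ → ℕ → ℝ) (S : Finset ℕ) : Prop :=
  ∀ i ∈ S, ∀ j ∈ S, ∃ c : List ℕ, (∀ x ∈ c, x ∈ S) ∧ List.Chain (edge p) i (c ++ [j])

/-- Assumption (A1): `P₁, P₂` irreducible and `P₄ = 0`. -/
def A1 (p : ℕ → ℕ → ℝ) (N : ℕ) : Prop :=
  irreducibleOn p (Finset.Icc 1 N) ∧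
    irreducibleOn (fun a b => p (a + N) (b + N)) (Finset.Icc 1 N) ∧
    ∀ i ∈ Finset.Icc 1 N, ∀ j ∈ Finset.Icc 1 N, p (i + N) j = 0

/-- Assumption (A2). -/
def A2 (p : ℕ → ℕ → ℝ) (N : ℕ) : Prop :=
  ∀ i ∈ Finset.Icc 1 N,
    2 ≤ ((Finset.Icc 1 N).filter fun j => 0 < p i j).card ∧
      2 ≤ ((Finset.Icc 1 N).filter fun j => 0 < p (i + N) (j + N)).card

/-- Assumption (A3): `ℳ_{i,j} = ∅` or `ℳ_{i,j} = {(i,j),(i,j⁺),(i⁺,j⁺)}`. -/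
def A3 (p : ℕ → ℕ → ℝ) (N : ℕ) : Prop :=
  ∀ i ∈ Finset.Icc 1 N, ∀ j ∈ Finset.Icc 1 N,
    (p i j = 0 ∧ p i (j + N) = 0 ∧ p (i + N) j = 0 ∧ p (i + N) (j + N) = 0) ∨
      (0 < p i j ∧ 0 < p i (j + N) ∧ p (i + N) j = 0 ∧ 0 < p (i + N) (j + N))

/-- Assumption (A4): `ℳ_{i,j} = ∅` or `ℳ_{i,j} = 𝒩_{i,j}`. -/
def A4 (p : ℕ → ℕ → ℝ) (N : ℕ) : Prop :=
  ∀ i ∈ Finset.Icc 1 N, ∀ j ∈ Finset.Icc 1 N,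
    (p i j = 0 ∧ p i (j + N) = 0 ∧ p (i + N) j = 0 ∧ p (i + N) (j + N) = 0) ∨
      (0 < p i j ∧ 0 < p i (j + N) ∧ 0 < p (i + N) j ∧ 0 < p (i + N) (j + N))

/-- Assumption (A5): `P₁` is irreducible. -/
def A5 (p : ℕ → ℕ → ℝ) (N : ℕ) : Prop := irreducibleOn p (Finset.Icc 1 N)

/-- `T_σ = T_{σ₁σ₂} ∘ ⋯ ∘ T_{σ_{n-1}σ_n}` (identity for words of length `≤ 1`). -/
def Tword {E : Type*} (T : ℕ → ℕ → E → E) : List ℕ → E → E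
  | [], x => x
  | [_], x => x
  | a :: b :: t, x => T a b (Tword T (b :: t) x)

/-- the cylinder set `J_σ = T_σ (J_{σ_n})`. -/
def Jword {E : Type*} (T : ℕ → ℕ → E → E) (J : ℕ → Set E) (σ : List ℕ) : Set E :=
  Tword T σ '' J (σ.getLastD 0)

/-- the Mauldin–Williams fractal `K = ⋂_k ⋃_{σ ∈ G_k} J_σ`. -/
def attractor {E : Type*} (p : ℕ → ℕ → ℝ) (N : ℕ) (T : ℕ → ℕ → E → E) (J : ℕ → Set E) :
    Set E :=
  ⋂ n : ℕ, ⋃ σ ∈ {σ : List ℕ | isGword p N σ ∧ σ.length = n + 1}, Jword T J σ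

/-- `μ` is reducible: `μ = ν₁ ∘ π₁⁻¹` for the Markov-type measure `ν₁` associated with some
`N × N` row-stochastic matrix and positive probability vector; equivalently, the cylinder
values of `μ` are of Markov type. -/
def reducible {E : Type*} [MeasurableSpace E] (p : ℕ → ℕ → ℝ) (N : ℕ)
    (T : ℕ → ℕ → E → E) (J : ℕ → Set E) (μ : Measure E) : Prop :=
  ∃ (pt : ℕ → ℕ → ℝ) (χt : ℕ → ℝ),
    (∀ i ∈ Finset.Icc 1 N, ∀ j ∈ Finset.Icc 1 N, 0 ≤ pt i j) ∧
      (∀ i ∈ Finset.Icc 1 N, ∑ j ∈ Finset.Icc 1 N, pt i j = 1) ∧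
      (∀ i ∈ Finset.Icc 1 N, 0 < χt i) ∧
      (∑ i ∈ Finset.Icc 1 N, χt i = 1) ∧
      ∀ σ : List ℕ, isSword p N σ →
        μ (Jword T J σ) = ENNReal.ofReal (χt (σ.headD 0) * pword pt σ)

/-- `e^r_{k,r}(μ)`: the `k`-th quantization error of order `r`, to the `r`-th power. -/
def quantErr {E : Type*} [PseudoMetricSpace E] [MeasurableSpace E] (r : ℝ) (μ : Measure E)
    (k : ℕ) : ℝ :=
  sInf ((fun α : Set E => ∫ x, Metric.infDist x α ^ r ∂μ) ''
    {α : Set E | α.Nonempty ∧ α.Finite ∧ α.ncard ≤ k})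

/-- the upper quantization coefficient `Q̄_r^s(μ) = limsup_k k^{r/s} e^r_{k,r}(μ)`. -/
def upperQC {E : Type*} [PseudoMetricSpace E] [MeasurableSpace E] (r s : ℝ)
    (μ : Measure E) : ℝ≥0∞ :=
  limsup (fun k : ℕ => ENNReal.ofReal ((k : ℝ) ^ (r / s) * quantErr r μ k)) atTop

/-- the lower quantization coefficient `Q̲_r^s(μ)`. -/
def lowerQC {E : Type*} [PseudoMetricSpace E] [MeasurableSpace E] (r s : ℝ)
    (μ : Measure E) : ℝ≥0∞ :=
  liminf (fun k : ℕ => ENNReal.ofReal ((k : ℝ) ^ (r / s) * quantErr r μ k)) atTop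

/-- the upper quantization dimension `D̄_r(μ) = limsup_k log k / (-log e_{k,r}(μ))`. -/
def upperQD {E : Type*} [PseudoMetricSpace E] [MeasurableSpace E] (r : ℝ)
    (μ : Measure E) : ℝ :=
  limsup (fun k : ℕ => Real.log k / (-Real.log (quantErr r μ k ^ (1 / r)))) atTop

/-- the lower quantization dimension `D̲_r(μ)`. -/
def lowerQD {E : Type*} [PseudoMetricSpace E] [MeasurableSpace E] (r : ℝ)
    (μ : Measure E) : ℝ :=
  liminf (fun k : ℕ => Real.log k / (-Real.log (quantErr r μ k ^ (1 / r)))) atTop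

/-- spectral radius of a real matrix: the largest modulus of a complex eigenvalue. -/
def specRad {n : Type*} [Fintype n] [DecidableEq n] (M : Matrix n n ℝ) : ℝ :=
  sSup (norm '' spectrum ℂ (M.map (algebraMap ℝ ℂ)))

/-- `A₁(s) = ((p_{i,j} s_{i,j}^r)^s)_{i,j=1}^N`. -/
def matA1 (p sr : ℕ → ℕ → ℝ) (N : ℕ) (r s : ℝ) : Matrix (Fin N) (Fin N) ℝ :=
  Matrix.of fun i j => (p (i.1 + 1) (j.1 + 1) * sr (i.1 + 1) (j.1 + 1) ^ r) ^ s

/-- `A₂(s) = ((p_{i⁺,j⁺} s_{i⁺,j⁺}^r)^s)_{i,j=1}^N`. -/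
def matA2 (p sr : ℕ → ℕ → ℝ) (N : ℕ) (r s : ℝ) : Matrix (Fin N) (Fin N) ℝ :=
  Matrix.of fun i j => (p (i.1 + 1 + N) (j.1 + 1 + N) * sr (i.1 + 1 + N) (j.1 + 1 + N) ^ r) ^ s

/-- `A₃(s) = ((p_{i,j⁺} s_{i,j⁺}^r)^s)_{i,j=1}^N`. -/
def matA3 (p sr : ℕ → ℕ → ℝ) (N : ℕ) (r s : ℝ) : Matrix (Fin N) (Fin N) ℝ :=
  Matrix.of fun i j => (p (i.1 + 1) (j.1 + 1 + N) * sr (i.1 + 1) (j.1 + 1 + N) ^ r) ^ s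

/-- `A₄(s) = ((p_{i⁺,j} s_{i⁺,j}^r)^s)_{i,j=1}^N`. -/
def matA4 (p sr : ℕ → ℕ → ℝ) (N : ℕ) (r s : ℝ) : Matrix (Fin N) (Fin N) ℝ :=
  Matrix.of fun i j => (p (i.1 + 1 + N) (j.1 + 1) * sr (i.1 + 1 + N) (j.1 + 1) ^ r) ^ s

/-- the block matrix `A(s) = [[A₁(s), A₃(s)], [A₄(s), A₂(s)]]`. -/
def matA (p sr : ℕ → ℕ → ℝ) (N : ℕ) (r s : ℝ) :
    Matrix (Fin N ⊕ Fin N) (Fin N ⊕ Fin N) ℝ :=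
  Matrix.fromBlocks (matA1 p sr N r s) (matA3 p sr N r s) (matA4 p sr N r s) (matA2 p sr N r s)

/-- `p̲ = min_{(i,j) ∈ G₂} p_{i,j}`. -/
def pMin (p : ℕ → ℕ → ℝ) (N : ℕ) : ℝ :=
  sInf {x | ∃ i ∈ Finset.Icc 1 (2 * N), ∃ j ∈ Finset.Icc 1 (2 * N), 0 < p i j ∧ x = p i j}

/-- `p̄ = max_{(i,j) ∈ G₂} p_{i,j}`. -/
def pMax (p : ℕ → ℕ → ℝ) (N : ℕ) : ℝ :=
  sSup {x | ∃ i ∈ Finset.Icc 1 (2 * N), ∃ j ∈ Finset.Icc 1 (2 * N), 0 < p i j ∧ x = p i j}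

/-- `s̲ = min_{(i,j) ∈ 𝒮₂} s_{i,j}`. -/
def sMin (p sr : ℕ → ℕ → ℝ) (N : ℕ) : ℝ :=
  sInf {x | ∃ i ∈ Finset.Icc 1 N, ∃ j ∈ Finset.Icc 1 N, isSword p N [i, j] ∧ x = sr i j}

/-- `s̄ = max_{(i,j) ∈ 𝒮₂} s_{i,j}`. -/
def sMax (p sr : ℕ → ℕ → ℝ) (N : ℕ) : ℝ :=
  sSup {x | ∃ i ∈ Finset.Icc 1 N, ∃ j ∈ Finset.Icc 1 N, isSword p N [i, j] ∧ x = sr i j}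

/-- `χ̲ = min_{1 ≤ i ≤ 2N} χ_i`. -/
def chiMin (χ : ℕ → ℝ) (N : ℕ) : ℝ := sInf {x | ∃ i ∈ Finset.Icc 1 (2 * N), x = χ i}

/-- `χ̄ = max_{1 ≤ i ≤ 2N} χ_i`. -/
def chiMax (χ : ℕ → ℝ) (N : ℕ) : ℝ := sSup {x | ∃ i ∈ Finset.Icc 1 (2 * N), x = χ i}

/-- `t` satisfies the defining property of `t_r`:
`(1/n) log Σ_{σ ∈ 𝒮_n} ℰ_r(σ)^{t/(t+r)} → 0`. -/
def trCond (p : ℕ → ℕ → ℝ) (χ : ℕ → ℝ) (sr : ℕ → ℕ → ℝ) (N : ℕ) (r t : ℝ) : Prop :=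
  0 < t ∧
    Tendsto (fun n : ℕ => (n : ℝ)⁻¹ *
      Real.log (∑ σ ∈ Sn p N n, Er p χ sr N r σ ^ (t / (t + r)))) atTop (nhds 0)

/-- the initial word of length `n` of an infinite sequence. -/
def seqTake (x : ℕ → ℕ) (n : ℕ) : List ℕ := (List.range n).map x

/-- `Γ` is a finite maximal antichain among the words satisfying `W`, with respect to the
infinite sequences satisfying `Wseq`. -/
def isMaxAntichain (W : List ℕ → Prop) (Wseq : (ℕ → ℕ) → Prop) (Γ : Finset (List ℕ)) : Prop :=
  (∀ σ ∈ Γ, W σ) ∧ (∀ σ ∈ Γ, ∀ τ ∈ Γ, σ ≠ τ → ¬σ <+: τ) ∧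
    ∀ x : ℕ → ℕ, Wseq x → ∃ n : ℕ, 1 ≤ n ∧ seqTake x n ∈ Γ

/-- infinite admissible sequences with letters in `Ψ`. -/
def isH1seq (p : ℕ → ℕ → ℝ) (N : ℕ) (x : ℕ → ℕ) : Prop :=
  (∀ n, x n ∈ Finset.Icc 1 N) ∧ ∀ n, 0 < p (x n) (x (n + 1))

/-- infinite admissible sequences with letters in `Υ`. -/
def isH2seq (p : ℕ → ℕ → ℝ) (N : ℕ) (x : ℕ → ℕ) : Prop :=
  (∀ n, x n ∈ Finset.Icc (N + 1) (2 * N)) ∧ ∀ n, 0 < p (x n) (x (n + 1))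

/-- minimal length of a word in `Γ`. -/
def minLen (Γ : Finset (List ℕ)) : ℕ := sInf {n | ∃ σ ∈ Γ, σ.length = n}

/-- maximal length of a word in `Γ`. -/
def maxLen (Γ : Finset (List ℕ)) : ℕ := sSup {n | ∃ σ ∈ Γ, σ.length = n}

/-- `Λ_{k,r} = {σ ∈ 𝒮^* : ℰ_r(σ) < c₁^k ≤ ℰ_r(σ^♭)}`. -/
def LamSet (p : ℕ → ℕ → ℝ) (χ : ℕ → ℝ) (sr : ℕ → ℕ → ℝ) (N : ℕ) (r c1 : ℝ) (k : ℕ) :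
    Set (List ℕ) :=
  {σ | isSword p N σ ∧ Er p χ sr N r σ < c1 ^ k ∧ c1 ^ k ≤ Er p χ sr N r σ.dropLast}

/-- `ℒ(σ) = {σ, σ⁺} ∪ {σ|_h ∗ (σ_{h+1}⁺, …, σ_n⁺) : 1 ≤ h ≤ n − 1}`. -/
def Lset (N : ℕ) (σ : List ℕ) : Finset (List ℕ) :=
  (Finset.range (σ.length + 1)).image fun h =>
    σ.take h ++ (σ.drop h).map (fun x => x + N)

/-!
Under (A4) a word of `𝒮*` admits every lift, so `Γ(σ∗τ)` is exactly the set of concatenations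
`σ̃∗τ̃` of lifts of `σ` and `τ`. Each such lift has weight
`χ_{σ̃₁} p_{σ̃} · p_{σ̃_last τ̃₁} · p_{τ̃}`, and the junction factor satisfies
`p̲ χ̄⁻¹ χ_{τ̃₁} ≤ p_{σ̃_last τ̃₁} ≤ p̄ χ̲⁻¹ χ_{τ̃₁}`, which sandwiches `μ(J_{σ∗τ})` between
multiples of `μ(J_σ) μ(J_τ)`. The contraction ratios factor exactly,
`s_{σ∗τ} = s_σ s_{σ_last τ₁} s_τ`, and the middle ratio lies in `[s̲, s̄]`; raising to the
power `s > 0` preserves both inequalities.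
-/

theorem _root_.List.Forall₂.forall_mem_right {α β : Type*} {R : α → β → Prop} {P : β → Prop}
    {l₁ : List α} {l₂ : List β} (h : List.Forall₂ R l₁ l₂)
    (hP : ∀ a ∈ l₁, ∀ b, R a b → P b) : ∀ b ∈ l₂, P b := by
  induction h with
  | nil => simp
  | cons hab _ ih =>
    simp only [List.mem_cons, forall_eq_or_imp] at hP ⊢
    exact ⟨hP.1 _ hab, ih hP.2⟩

theorem _root_.List.Forall₂.isChain_of_isChain {α β : Type*} {R : α → β → Prop} {E : β → β → Prop}
    {l : List α} {l₀ l₁ : List β}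
    (hE : ∀ i ∈ l, ∀ j ∈ l, ∀ a b a' b', R i a → R j b → R i a' → R j b' → E a b → E a' b')
    (h₀ : List.Forall₂ R l l₀) (h₁ : List.Forall₂ R l l₁) (hc : l₀.IsChain E) :
    l₁.IsChain E := by
  have hlen₀ := h₀.length_eq
  have hlen₁ := h₁.length_eq
  rw [List.isChain_iff_getElem] at hc ⊢
  intro n hn
  exact hE _ (List.getElem_mem (by omega)) _ (List.getElem_mem (by omega)) _ _ _ _
    (h₀.get (by omega) (by omega)) (h₀.get (by omega) (by omega))
    (h₁.get (by omega) (by omega)) (h₁.get (by omega) (by omega)) (hc n (by omega))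

theorem _root_.List.headD_mem {α : Type*} {l : List α} (h : l ≠ []) (d : α) : l.headD d ∈ l := by
  cases l <;> simp_all

theorem _root_.List.getLastD_mem {α : Type*} {l : List α} (h : l ≠ []) (d : α) :
    l.getLastD d ∈ l := by
  cases l with
  | nil => exact absurd rfl h
  | cons x t => rw [List.getLastD_cons]; exact List.getLastD_mem_cons

theorem mul_sum_mul_sum_le_sum_sum {ι κ : Type*} (s : Finset ι) (t : Finset κ) {x : ι → ℝ}
    {y z : κ → ℝ} {k : ι → κ → ℝ} {c : ℝ} (hx : ∀ i ∈ s, 0 ≤ x i) (hy : ∀ j ∈ t, 0 ≤ y j)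
    (hk : ∀ i ∈ s, ∀ j ∈ t, c * z j ≤ k i j) :
    c * ((∑ i ∈ s, x i) * ∑ j ∈ t, z j * y j) ≤ ∑ i ∈ s, ∑ j ∈ t, x i * (k i j * y j) := by
  rw [Finset.sum_mul_sum, Finset.mul_sum]
  refine Finset.sum_le_sum fun i hi => ?_
  rw [Finset.mul_sum]
  refine Finset.sum_le_sum fun j hj => ?_
  calc c * (x i * (z j * y j)) = x i * (c * z j * y j) := by ring
    _ ≤ x i * (k i j * y j) :=
      mul_le_mul_of_nonneg_left (mul_le_mul_of_nonneg_right (hk i hi j hj) (hy j hj)) (hx i hi)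

theorem sum_sum_le_mul_sum_mul_sum {ι κ : Type*} (s : Finset ι) (t : Finset κ) {x : ι → ℝ}
    {y z : κ → ℝ} {k : ι → κ → ℝ} {c : ℝ} (hx : ∀ i ∈ s, 0 ≤ x i) (hy : ∀ j ∈ t, 0 ≤ y j)
    (hk : ∀ i ∈ s, ∀ j ∈ t, k i j ≤ c * z j) :
    ∑ i ∈ s, ∑ j ∈ t, x i * (k i j * y j) ≤ c * ((∑ i ∈ s, x i) * ∑ j ∈ t, z j * y j) := by
  rw [Finset.sum_mul_sum, Finset.mul_sum]
  refine Finset.sum_le_sum fun i hi => ?_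
  rw [Finset.mul_sum]
  refine Finset.sum_le_sum fun j hj => ?_
  calc x i * (k i j * y j) ≤ x i * (c * z j * y j) :=
      mul_le_mul_of_nonneg_left (mul_le_mul_of_nonneg_right (hk i hi j hj) (hy j hj)) (hx i hi)
    _ = c * (x i * (z j * y j)) := by ring

theorem mul_rpow_mul_rpow_le_rpow {c x y z s : ℝ} (hc : 0 ≤ c) (hx : 0 ≤ x) (hy : 0 ≤ y)
    (hs : 0 ≤ s) (h : c * (x * y) ≤ z) : c ^ s * x ^ s * y ^ s ≤ z ^ s := by
  rw [mul_assoc, ← Real.mul_rpow hx hy, ← Real.mul_rpow hc (mul_nonneg hx hy)]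
  exact Real.rpow_le_rpow (mul_nonneg hc (mul_nonneg hx hy)) h hs

theorem rpow_le_mul_rpow_mul_rpow {c x y z s : ℝ} (hc : 0 ≤ c) (hx : 0 ≤ x) (hy : 0 ≤ y)
    (hz : 0 ≤ z) (hs : 0 ≤ s) (h : z ≤ c * (x * y)) : z ^ s ≤ c ^ s * x ^ s * y ^ s := by
  rw [mul_assoc, ← Real.mul_rpow hx hy, ← Real.mul_rpow hc (mul_nonneg hx hy)]
  exact Real.rpow_le_rpow hz h hs

section Lifts

variable {p : ℕ → ℕ → ℝ} {N : ℕ}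

theorem mem_lifts_iff {σ ρ : List ℕ} :
    ρ ∈ lifts N σ ↔ List.Forall₂ (fun i a => a = i ∨ a = i + N) σ ρ := by
  induction σ generalizing ρ with
  | nil => simp [lifts]
  | cons i t ih =>
    cases ρ with
    | nil => simp [lifts]
    | cons a l =>
      simp only [lifts, Finset.mem_biUnion, Finset.mem_insert, Finset.mem_singleton,
        List.cons.injEq, List.forall₂_cons, ← ih]
      grind

theorem self_mem_lifts (σ : List ℕ) : σ ∈ lifts N σ :=
  mem_lifts_iff.2 (List.forall₂_same.2 fun _ _ => Or.inl rfl)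

theorem lifts_append (σ τ : List ℕ) :
    lifts N (σ ++ τ) = (lifts N σ ×ˢ lifts N τ).image fun ab => ab.1 ++ ab.2 := by
  ext c
  simp only [Finset.mem_image, Finset.mem_product, mem_lifts_iff, Prod.exists]
  constructor
  · intro h
    refine ⟨c.take σ.length, c.drop σ.length, ⟨?_, ?_⟩, List.take_append_drop _ _⟩
    · simpa using List.forall₂_take σ.length h
    · simpa using List.forall₂_drop σ.length h
  · rintro ⟨a, b, ⟨ha, hb⟩, rfl⟩
    exact List.rel_append ha hb

theorem mem_Icc_of_mem_lifts {σ ρ : List ℕ} (hσ : ∀ x ∈ σ, x ∈ Finset.Icc 1 N)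
    (hρ : ρ ∈ lifts N σ) : ∀ y ∈ ρ, y ∈ Finset.Icc 1 (2 * N) := by
  refine (mem_lifts_iff.1 hρ).forall_mem_right fun x hx y hy => ?_
  have := hσ x hx
  simp only [Finset.mem_Icc] at this ⊢
  omega

theorem ne_nil_of_mem_lifts {σ ρ : List ℕ} (hσ : σ ≠ []) (hρ : ρ ∈ lifts N σ) : ρ ≠ [] := by
  rw [← List.length_pos_iff, ← (mem_lifts_iff.1 hρ).length_eq]
  exact List.length_pos_iff.2 hσ

theorem A4.pos_of_pos (hA4 : A4 p N) {i j : ℕ} (hi : i ∈ Finset.Icc 1 N)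
    (hj : j ∈ Finset.Icc 1 N) {a b a' b' : ℕ} (ha : a = i ∨ a = i + N) (hb : b = j ∨ b = j + N)
    (ha' : a' = i ∨ a' = i + N) (hb' : b' = j ∨ b' = j + N) (h : 0 < p a b) : 0 < p a' b' := by
  rcases hA4 i hi j hj with ⟨h₁, h₂, h₃, h₄⟩ | ⟨h₁, h₂, h₃, h₄⟩ <;>
    rcases ha with rfl | rfl <;> rcases hb with rfl | rfl <;>
    rcases ha' with rfl | rfl <;> rcases hb' with rfl | rfl <;> linarith

theorem Gam_eq_lifts (hA4 : A4 p N) {σ : List ℕ} (hσ : isSword p N σ) :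
    Gam p N σ = lifts N σ := by
  obtain ⟨⟨-, hΨ⟩, ρ₀, hρ₀⟩ := hσ
  rw [Gam, Finset.mem_filter] at hρ₀
  refine Finset.filter_true_of_mem fun ρ hρ => ?_
  exact (mem_lifts_iff.1 hρ₀.1).isChain_of_isChain
    (fun i hi j hj _ _ _ _ => A4.pos_of_pos hA4 (hΨ i hi) (hΨ j hj))
    (mem_lifts_iff.1 hρ) hρ₀.2

theorem isChain_of_isSword (hA4 : A4 p N) {σ : List ℕ} (hσ : isSword p N σ) :
    σ.IsChain (edge p) := by
  have h := self_mem_lifts (N := N) σ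
  rw [← Gam_eq_lifts hA4 hσ, Gam, Finset.mem_filter] at h
  exact h.2

theorem isSword_pair {i j : ℕ} (hi : i ∈ Finset.Icc 1 N) (hj : j ∈ Finset.Icc 1 N)
    (h : 0 < p i j) : isSword p N [i, j] :=
  ⟨⟨by simp, by simp only [List.mem_cons, List.not_mem_nil]; grind⟩, [i, j],
    Finset.mem_filter.2 ⟨self_mem_lifts _, List.isChain_pair.2 h⟩⟩

end Lifts

section Weights

variable {f : ℕ → ℕ → ℝ}

theorem sword_eq_pword : sword f = pword f := by
  funext l
  induction l with
  | nil => rfl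
  | cons a t ih => cases t with
    | nil => rfl
    | cons b t => simp only [sword, pword, ih]

theorem pword_pos {l : List ℕ} (h : l.IsChain fun a b => 0 < f a b) : 0 < pword f l := by
  induction l with
  | nil => simp [pword]
  | cons a t ih => cases t with
    | nil => simp [pword]
    | cons b t =>
      rw [List.isChain_cons_cons] at h
      exact mul_pos h.1 (ih h.2)

theorem pword_append {a b : List ℕ} (ha : a ≠ []) (hb : b ≠ []) :
    pword f (a ++ b) = pword f a * f (a.getLastD 0) (b.headD 0) * pword f b := by
  induction a with
  | nil => exact absurd rfl ha
  | cons x t ih => cases t with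
    | nil =>
      obtain ⟨y, b, rfl⟩ := List.exists_cons_of_ne_nil hb
      simp [pword]
    | cons y t =>
      rw [List.cons_append, List.cons_append, pword, ← List.cons_append, ih (by simp), pword,
        List.getLastD_cons, List.getLastD_cons, List.getLastD_cons]
      ring

end Weights

section Extrema

variable {p sr : ℕ → ℕ → ℝ} {χ : ℕ → ℝ} {N : ℕ}

theorem finite_setOf_exists₂ (s t : Finset ℕ) (P : ℕ → ℕ → Prop) (f : ℕ → ℕ → ℝ) :
    {x | ∃ i ∈ s, ∃ j ∈ t, P i j ∧ x = f i j}.Finite :=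
  (s.finite_toSet.image2 f t.finite_toSet).subset
    fun _ ⟨i, hi, j, hj, _, hx⟩ => ⟨i, hi, j, hj, hx.symm⟩

theorem finite_setOf_exists (s : Finset ℕ) (f : ℕ → ℝ) : {x | ∃ i ∈ s, x = f i}.Finite :=
  (s.finite_toSet.image f).subset fun _ ⟨i, hi, hx⟩ => ⟨i, hi, hx.symm⟩

theorem pMin_nonneg : 0 ≤ pMin p N :=
  Real.sInf_nonneg fun _ ⟨_, _, _, _, h, hx⟩ => hx ▸ h.le

theorem pMax_nonneg : 0 ≤ pMax p N :=
  Real.sSup_nonneg fun _ ⟨_, _, _, _, h, hx⟩ => hx ▸ h.le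

theorem pMin_le {i j : ℕ} (hi : i ∈ Finset.Icc 1 (2 * N)) (hj : j ∈ Finset.Icc 1 (2 * N))
    (h : 0 < p i j) : pMin p N ≤ p i j :=
  csInf_le (finite_setOf_exists₂ _ _ _ _).bddBelow ⟨i, hi, j, hj, h, rfl⟩

theorem le_pMax {i j : ℕ} (hi : i ∈ Finset.Icc 1 (2 * N)) (hj : j ∈ Finset.Icc 1 (2 * N))
    (h : 0 < p i j) : p i j ≤ pMax p N :=
  le_csSup (finite_setOf_exists₂ _ _ _ _).bddAbove ⟨i, hi, j, hj, h, rfl⟩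

theorem sMin_nonneg (hsr : ∀ i ∈ Finset.Icc 1 N, ∀ j ∈ Finset.Icc 1 N, isSword p N [i, j] →
    0 < sr i j) : 0 ≤ sMin p sr N :=
  Real.sInf_nonneg fun _ ⟨i, hi, j, hj, h, hx⟩ => hx ▸ (hsr i hi j hj h).le

theorem sMax_nonneg (hsr : ∀ i ∈ Finset.Icc 1 N, ∀ j ∈ Finset.Icc 1 N, isSword p N [i, j] →
    0 < sr i j) : 0 ≤ sMax p sr N :=
  Real.sSup_nonneg fun _ ⟨i, hi, j, hj, h, hx⟩ => hx ▸ (hsr i hi j hj h).le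

theorem sMin_le {i j : ℕ} (hi : i ∈ Finset.Icc 1 N) (hj : j ∈ Finset.Icc 1 N)
    (h : isSword p N [i, j]) : sMin p sr N ≤ sr i j :=
  csInf_le (finite_setOf_exists₂ _ _ _ _).bddBelow ⟨i, hi, j, hj, h, rfl⟩

theorem le_sMax {i j : ℕ} (hi : i ∈ Finset.Icc 1 N) (hj : j ∈ Finset.Icc 1 N)
    (h : isSword p N [i, j]) : sr i j ≤ sMax p sr N :=
  le_csSup (finite_setOf_exists₂ _ _ _ _).bddAbove ⟨i, hi, j, hj, h, rfl⟩

theorem chiMin_nonneg (hχ : ∀ i ∈ Finset.Icc 1 (2 * N), 0 < χ i) : 0 ≤ chiMin χ N :=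
  Real.sInf_nonneg fun _ ⟨i, hi, hx⟩ => hx ▸ (hχ i hi).le

theorem chiMax_nonneg (hχ : ∀ i ∈ Finset.Icc 1 (2 * N), 0 < χ i) : 0 ≤ chiMax χ N :=
  Real.sSup_nonneg fun _ ⟨i, hi, hx⟩ => hx ▸ (hχ i hi).le

theorem chiMin_le {i : ℕ} (hi : i ∈ Finset.Icc 1 (2 * N)) : chiMin χ N ≤ χ i :=
  csInf_le (finite_setOf_exists _ _).bddBelow ⟨i, hi, rfl⟩

theorem le_chiMax {i : ℕ} (hi : i ∈ Finset.Icc 1 (2 * N)) : χ i ≤ chiMax χ N :=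
  le_csSup (finite_setOf_exists _ _).bddAbove ⟨i, hi, rfl⟩

theorem chiMin_pos (hχ : ∀ i ∈ Finset.Icc 1 (2 * N), 0 < χ i) {i : ℕ}
    (hi : i ∈ Finset.Icc 1 (2 * N)) : 0 < chiMin χ N := by
  have hne : {x | ∃ k ∈ Finset.Icc 1 (2 * N), x = χ k}.Nonempty := ⟨χ i, i, hi, rfl⟩
  obtain ⟨k, hk, hx⟩ := hne.csInf_mem (finite_setOf_exists _ χ)
  exact (hχ k hk).trans_eq hx.symm

end Extrema

section Cylinders

variable {p : ℕ → ℕ → ℝ} {χ : ℕ → ℝ} {N : ℕ} {σ τ : List ℕ}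

theorem headD_mem_Icc_of_mem_lifts (hσ : isPsiWord N σ) {a : List ℕ} (ha : a ∈ lifts N σ) :
    a.headD 0 ∈ Finset.Icc 1 (2 * N) :=
  mem_Icc_of_mem_lifts hσ.2 ha _ (List.headD_mem (ne_nil_of_mem_lifts hσ.1 ha) 0)

theorem getLastD_mem_Icc_of_mem_lifts (hσ : isPsiWord N σ) {a : List ℕ} (ha : a ∈ lifts N σ) :
    a.getLastD 0 ∈ Finset.Icc 1 (2 * N) :=
  mem_Icc_of_mem_lifts hσ.2 ha _ (List.getLastD_mem (ne_nil_of_mem_lifts hσ.1 ha) 0)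

theorem pword_pos_of_mem_lifts (hA4 : A4 p N) (hσ : isSword p N σ) {a : List ℕ}
    (ha : a ∈ lifts N σ) : 0 < pword p a := by
  rw [← Gam_eq_lifts hA4 hσ, Gam, Finset.mem_filter] at ha
  exact pword_pos ha.2

theorem pos_junction (hA4 : A4 p N) (hστ : isSword p N (σ ++ τ)) {a b : List ℕ}
    (ha : a ∈ lifts N σ) (hb : b ∈ lifts N τ) (ha₀ : a ≠ []) (hb₀ : b ≠ []) :
    0 < p (a.getLastD 0) (b.headD 0) := by
  have hab : a ++ b ∈ Gam p N (σ ++ τ) := by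
    rw [Gam_eq_lifts hA4 hστ, lifts_append]
    exact Finset.mem_image_of_mem (fun ab : List ℕ × List ℕ => ab.1 ++ ab.2)
      (Finset.mem_product.2 ⟨ha, hb⟩ : (a, b) ∈ lifts N σ ×ˢ lifts N τ)
  have hc : (a ++ b).IsChain (edge p) := (Finset.mem_filter.1 hab).2
  rw [List.isChain_append] at hc
  exact hc.2.2 _ (by simp [List.getLast?_eq_some_getLast ha₀])
    _ (by simp [List.head?_eq_some_head hb₀])

theorem muJ_eq_sum_lifts (hA4 : A4 p N) (hσ : isSword p N σ) :
    muJ p χ N σ = ∑ a ∈ lifts N σ, χ (a.headD 0) * pword p a := by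
  rw [muJ, Gam_eq_lifts hA4 hσ]

theorem muJ_append (hA4 : A4 p N) (hσ : isSword p N σ) (hτ : isSword p N τ)
    (hστ : isSword p N (σ ++ τ)) :
    muJ p χ N (σ ++ τ) = ∑ a ∈ lifts N σ, ∑ b ∈ lifts N τ,
      χ (a.headD 0) * pword p a * (p (a.getLastD 0) (b.headD 0) * pword p b) := by
  have hinj : Set.InjOn (fun ab : List ℕ × List ℕ => ab.1 ++ ab.2) ↑(lifts N σ ×ˢ lifts N τ) := by
    rintro ⟨a₁, b₁⟩ h₁ ⟨a₂, b₂⟩ h₂ h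
    simp only [Finset.coe_product, Set.mem_prod, Finset.mem_coe] at h₁ h₂
    have hlen : a₁.length = a₂.length := by
      rw [← (mem_lifts_iff.1 h₁.1).length_eq, ← (mem_lifts_iff.1 h₂.1).length_eq]
    obtain ⟨rfl, rfl⟩ := List.append_inj h hlen
    rfl
  rw [muJ, Gam_eq_lifts hA4 hστ, lifts_append, Finset.sum_image hinj, Finset.sum_product]
  refine Finset.sum_congr rfl fun a ha => Finset.sum_congr rfl fun b hb => ?_
  have ha₀ := ne_nil_of_mem_lifts hσ.1.1 ha
  obtain ⟨x, t, rfl⟩ := List.exists_cons_of_ne_nil ha₀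
  rw [pword_append ha₀ (ne_nil_of_mem_lifts hτ.1.1 hb)]
  simp only [List.cons_append, List.headD_cons]
  ring

theorem muJ_pos (hχ : ∀ i ∈ Finset.Icc 1 (2 * N), 0 < χ i) (hA4 : A4 p N)
    (hσ : isSword p N σ) : 0 < muJ p χ N σ := by
  rw [muJ_eq_sum_lifts hA4 hσ]
  exact Finset.sum_pos (fun a ha => mul_pos (hχ _ (headD_mem_Icc_of_mem_lifts hσ.1 ha))
    (pword_pos_of_mem_lifts hA4 hσ ha)) ⟨σ, self_mem_lifts σ⟩

theorem junction_bounds (hχ : ∀ i ∈ Finset.Icc 1 (2 * N), 0 < χ i) (hA4 : A4 p N)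
    (hσ : isSword p N σ) (hτ : isSword p N τ) (hστ : isSword p N (σ ++ τ)) {a b : List ℕ}
    (ha : a ∈ lifts N σ) (hb : b ∈ lifts N τ) :
    pMin p N * (chiMax χ N)⁻¹ * χ (b.headD 0) ≤ p (a.getLastD 0) (b.headD 0) ∧
      p (a.getLastD 0) (b.headD 0) ≤ pMax p N * (chiMin χ N)⁻¹ * χ (b.headD 0) := by
  have hx := getLastD_mem_Icc_of_mem_lifts hσ.1 ha
  have hy := headD_mem_Icc_of_mem_lifts hτ.1 hb
  have hxy := pos_junction hA4 hστ ha hb (ne_nil_of_mem_lifts hσ.1.1 ha)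
    (ne_nil_of_mem_lifts hτ.1.1 hb)
  have hχmax : 0 < chiMax χ N := (hχ _ hy).trans_le (le_chiMax hy)
  have hχmin : 0 < chiMin χ N := chiMin_pos hχ hy
  constructor
  · calc pMin p N * (chiMax χ N)⁻¹ * χ (b.headD 0)
        ≤ pMin p N * (chiMax χ N)⁻¹ * chiMax χ N := by
          gcongr
          · exact mul_nonneg pMin_nonneg (inv_nonneg.2 hχmax.le)
          · exact le_chiMax hy
      _ = pMin p N := by field_simp
      _ ≤ p (a.getLastD 0) (b.headD 0) := pMin_le hx hy hxy
  · calc p (a.getLastD 0) (b.headD 0) ≤ pMax p N := le_pMax hx hy hxy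
      _ = pMax p N * (chiMin χ N)⁻¹ * chiMin χ N := by field_simp
      _ ≤ pMax p N * (chiMin χ N)⁻¹ * χ (b.headD 0) := by
          gcongr
          · exact mul_nonneg pMax_nonneg (inv_nonneg.2 hχmin.le)
          · exact chiMin_le hy

theorem muJ_append_ge (hχ : ∀ i ∈ Finset.Icc 1 (2 * N), 0 < χ i) (hA4 : A4 p N)
    (hσ : isSword p N σ) (hτ : isSword p N τ) (hστ : isSword p N (σ ++ τ)) :
    pMin p N * (chiMax χ N)⁻¹ * (muJ p χ N σ * muJ p χ N τ) ≤ muJ p χ N (σ ++ τ) := by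
  rw [muJ_append hA4 hσ hτ hστ, muJ_eq_sum_lifts hA4 hσ, muJ_eq_sum_lifts hA4 hτ]
  exact mul_sum_mul_sum_le_sum_sum _ _
    (fun a ha => (mul_pos (hχ _ (headD_mem_Icc_of_mem_lifts hσ.1 ha))
      (pword_pos_of_mem_lifts hA4 hσ ha)).le)
    (fun b hb => (pword_pos_of_mem_lifts hA4 hτ hb).le)
    fun a ha b hb => (junction_bounds hχ hA4 hσ hτ hστ ha hb).1

theorem muJ_append_le (hχ : ∀ i ∈ Finset.Icc 1 (2 * N), 0 < χ i) (hA4 : A4 p N)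
    (hσ : isSword p N σ) (hτ : isSword p N τ) (hστ : isSword p N (σ ++ τ)) :
    muJ p χ N (σ ++ τ) ≤ pMax p N * (chiMin χ N)⁻¹ * (muJ p χ N σ * muJ p χ N τ) := by
  rw [muJ_append hA4 hσ hτ hστ, muJ_eq_sum_lifts hA4 hσ, muJ_eq_sum_lifts hA4 hτ]
  exact sum_sum_le_mul_sum_mul_sum _ _
    (fun a ha => (mul_pos (hχ _ (headD_mem_Icc_of_mem_lifts hσ.1 ha))
      (pword_pos_of_mem_lifts hA4 hσ ha)).le)
    (fun b hb => (pword_pos_of_mem_lifts hA4 hτ hb).le)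
    fun a ha b hb => (junction_bounds hχ hA4 hσ hτ hστ ha hb).2

end Cylinders

section Energy

variable {p sr : ℕ → ℕ → ℝ} {χ : ℕ → ℝ} {N : ℕ} {r : ℝ} {σ τ : List ℕ}

theorem Er_of_ne_nil (h : σ ≠ []) : Er p χ sr N r σ = muJ p χ N σ * sword sr σ ^ r := if_neg h

theorem sword_append (ha : σ ≠ []) (hb : τ ≠ []) :
    sword sr (σ ++ τ) = sword sr σ * sr (σ.getLastD 0) (τ.headD 0) * sword sr τ := by
  simp only [sword_eq_pword, pword_append ha hb]

theorem sword_pos (hA4 : A4 p N)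
    (hsr : ∀ i ∈ Finset.Icc 1 N, ∀ j ∈ Finset.Icc 1 N, isSword p N [i, j] → 0 < sr i j)
    (hσ : isSword p N σ) : 0 < sword sr σ := by
  rw [sword_eq_pword]
  exact pword_pos ((isChain_of_isSword hA4 hσ).imp_of_mem_imp fun i j hi hj h =>
    hsr i (hσ.1.2 i hi) j (hσ.1.2 j hj) (isSword_pair (hσ.1.2 i hi) (hσ.1.2 j hj) h))

theorem Er_pos (hχ : ∀ i ∈ Finset.Icc 1 (2 * N), 0 < χ i) (hA4 : A4 p N)
    (hsr : ∀ i ∈ Finset.Icc 1 N, ∀ j ∈ Finset.Icc 1 N, isSword p N [i, j] → 0 < sr i j)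
    (hσ : isSword p N σ) : 0 < Er p χ sr N r σ := by
  rw [Er_of_ne_nil hσ.1.1]
  exact mul_pos (muJ_pos hχ hA4 hσ) (Real.rpow_pos_of_pos (sword_pos hA4 hsr hσ) r)

theorem isSword_junction (hA4 : A4 p N) (hσ : isSword p N σ) (hτ : isSword p N τ)
    (hστ : isSword p N (σ ++ τ)) : isSword p N [σ.getLastD 0, τ.headD 0] :=
  isSword_pair (hσ.1.2 _ (List.getLastD_mem hσ.1.1 0)) (hτ.1.2 _ (List.headD_mem hτ.1.1 0))
    (pos_junction hA4 hστ (self_mem_lifts σ) (self_mem_lifts τ) hσ.1.1 hτ.1.1)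

theorem Er_append_eq (hσ : σ ≠ []) (hτ : τ ≠ [])
    (h₀ : 0 ≤ sword sr σ) (h₁ : 0 ≤ sr (σ.getLastD 0) (τ.headD 0)) (h₂ : 0 ≤ sword sr τ) :
    Er p χ sr N r (σ ++ τ) = muJ p χ N (σ ++ τ) * sr (σ.getLastD 0) (τ.headD 0) ^ r *
      (sword sr σ ^ r * sword sr τ ^ r) := by
  rw [Er_of_ne_nil (by simp [hσ]), sword_append hσ hτ, Real.mul_rpow (mul_nonneg h₀ h₁) h₂,
    Real.mul_rpow h₀ h₁]
  ring

theorem Er_append_ge (hr : 0 ≤ r) (hχ : ∀ i ∈ Finset.Icc 1 (2 * N), 0 < χ i) (hA4 : A4 p N)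
    (hsr : ∀ i ∈ Finset.Icc 1 N, ∀ j ∈ Finset.Icc 1 N, isSword p N [i, j] → 0 < sr i j)
    (hσ : isSword p N σ) (hτ : isSword p N τ) (hστ : isSword p N (σ ++ τ)) :
    pMin p N * sMin p sr N ^ r * (chiMax χ N)⁻¹ * (Er p χ sr N r σ * Er p χ sr N r τ) ≤
      Er p χ sr N r (σ ++ τ) := by
  have hj := isSword_junction hA4 hσ hτ hστ
  have hx := hσ.1.2 _ (List.getLastD_mem hσ.1.1 0)
  have hy := hτ.1.2 _ (List.headD_mem hτ.1.1 0)
  have hwσ := (sword_pos hA4 hsr hσ).le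
  have hwτ := (sword_pos hA4 hsr hτ).le
  rw [Er_of_ne_nil hσ.1.1, Er_of_ne_nil hτ.1.1,
    Er_append_eq hσ.1.1 hτ.1.1 hwσ (hsr _ hx _ hy hj).le hwτ]
  calc _ = pMin p N * (chiMax χ N)⁻¹ * (muJ p χ N σ * muJ p χ N τ) * sMin p sr N ^ r *
        (sword sr σ ^ r * sword sr τ ^ r) := by ring
    _ ≤ _ := by
      gcongr ?_ * ?_ * _
      · exact Real.rpow_nonneg (sMin_nonneg hsr) r
      · exact (muJ_pos hχ hA4 hστ).le
      · exact muJ_append_ge hχ hA4 hσ hτ hστ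
      · exact Real.rpow_le_rpow (sMin_nonneg hsr) (sMin_le hx hy hj) hr

theorem Er_append_le (hr : 0 ≤ r) (hχ : ∀ i ∈ Finset.Icc 1 (2 * N), 0 < χ i) (hA4 : A4 p N)
    (hsr : ∀ i ∈ Finset.Icc 1 N, ∀ j ∈ Finset.Icc 1 N, isSword p N [i, j] → 0 < sr i j)
    (hσ : isSword p N σ) (hτ : isSword p N τ) (hστ : isSword p N (σ ++ τ)) :
    Er p χ sr N r (σ ++ τ) ≤
      pMax p N * sMax p sr N ^ r * (chiMin χ N)⁻¹ * (Er p χ sr N r σ * Er p χ sr N r τ) := by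
  have hj := isSword_junction hA4 hσ hτ hστ
  have hx := hσ.1.2 _ (List.getLastD_mem hσ.1.1 0)
  have hy := hτ.1.2 _ (List.headD_mem hτ.1.1 0)
  have he := (hsr _ hx _ hy hj).le
  have hwσ := (sword_pos hA4 hsr hσ).le
  have hwτ := (sword_pos hA4 hsr hτ).le
  rw [Er_of_ne_nil hσ.1.1, Er_of_ne_nil hτ.1.1, Er_append_eq hσ.1.1 hτ.1.1 hwσ he hwτ]
  calc _ ≤ pMax p N * (chiMin χ N)⁻¹ * (muJ p χ N σ * muJ p χ N τ) * sMax p sr N ^ r *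
        (sword sr σ ^ r * sword sr τ ^ r) := by
        gcongr ?_ * ?_ * _
        · exact mul_nonneg (mul_nonneg pMax_nonneg (inv_nonneg.2 (chiMin_nonneg hχ)))
            (mul_nonneg (muJ_pos hχ hA4 hσ).le (muJ_pos hχ hA4 hτ).le)
        · exact muJ_append_le hχ hA4 hσ hτ hστ
        · exact Real.rpow_le_rpow he (le_sMax hx hy hj) hr
    _ = _ := by ring

end Energy

theorem stmt17_general
    (N q : ℕ) (r : ℝ) (hr : 0 < r)
    (p : ℕ → ℕ → ℝ) (χ : ℕ → ℝ)
    (hχpos : ∀ i ∈ Finset.Icc 1 (2 * N), 0 < χ i)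
    (sr : ℕ → ℕ → ℝ)
    (T : ℕ → ℕ → EuclideanSpace ℝ (Fin q) → EuclideanSpace ℝ (Fin q))
    (hsim : ∀ i ∈ Finset.Icc 1 N, ∀ j ∈ Finset.Icc 1 N, isSword p N [i, j] →
      0 < sr i j ∧ sr i j < 1 ∧ ∀ x y, dist (T i j x) (T i j y) = sr i j * dist x y)
    (hA4 : A4 p N)
    (σ τ : List ℕ) (hσ : isSword p N σ) (hτ : isSword p N τ)
    (hστ : isSword p N (σ ++ τ)) (s : ℝ) (hs : 0 < s) :
    (pMin p N * sMin p sr N ^ r * (chiMax χ N)⁻¹) ^ s *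
          Er p χ sr N r σ ^ s * Er p χ sr N r τ ^ s ≤
        Er p χ sr N r (σ ++ τ) ^ s ∧
      Er p χ sr N r (σ ++ τ) ^ s ≤
        (pMax p N * sMax p sr N ^ r * (chiMin χ N)⁻¹) ^ s *
          Er p χ sr N r σ ^ s * Er p χ sr N r τ ^ s := by
  have hsr : ∀ i ∈ Finset.Icc 1 N, ∀ j ∈ Finset.Icc 1 N, isSword p N [i, j] → 0 < sr i j :=
    fun i hi j hj h => (hsim i hi j hj h).1
  have hEσ := (Er_pos (r := r) hχpos hA4 hsr hσ).le
  have hEτ := (Er_pos (r := r) hχpos hA4 hsr hτ).le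
  have hlower : 0 ≤ pMin p N * sMin p sr N ^ r * (chiMax χ N)⁻¹ :=
    mul_nonneg (mul_nonneg pMin_nonneg (Real.rpow_nonneg (sMin_nonneg hsr) r))
      (inv_nonneg.2 (chiMax_nonneg hχpos))
  have hupper : 0 ≤ pMax p N * sMax p sr N ^ r * (chiMin χ N)⁻¹ :=
    mul_nonneg (mul_nonneg pMax_nonneg (Real.rpow_nonneg (sMax_nonneg hsr) r))
      (inv_nonneg.2 (chiMin_nonneg hχpos))
  exact ⟨mul_rpow_mul_rpow_le_rpow hlower hEσ hEτ hs.le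
      (Er_append_ge hr.le hχpos hA4 hsr hσ hτ hστ),
    rpow_le_mul_rpow_mul_rpow hupper hEσ hEτ (Er_pos hχpos hA4 hsr hστ).le hs.le
      (Er_append_le hr.le hχpos hA4 hsr hσ hτ hστ)⟩

/-- **Lemma 5.1.** Assume (A2), (A4) and (A5). For `σ∗τ ∈ 𝒮^*` and `s > 0`:
`(p̲ s̲^r χ̄⁻¹)^s ℰ_r(σ)^s ℰ_r(τ)^s ≤ ℰ_r(σ∗τ)^s ≤ (p̄ s̄^r χ̲⁻¹)^s ℰ_r(σ)^s ℰ_r(τ)^s`. -/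
theorem stmt17
    (N q : ℕ) (hN : 2 ≤ N) (hq : 1 ≤ q) (r : ℝ) (hr : 0 < r)
    (p : ℕ → ℕ → ℝ) (χ : ℕ → ℝ)
    (hp0 : ∀ i j, 0 ≤ p i j)
    (hpsupp : ∀ i j, 0 < p i j → i ∈ Finset.Icc 1 (2 * N) ∧ j ∈ Finset.Icc 1 (2 * N))
    (hpsum : ∀ i ∈ Finset.Icc 1 (2 * N), ∑ j ∈ Finset.Icc 1 (2 * N), p i j = 1)
    (hχpos : ∀ i ∈ Finset.Icc 1 (2 * N), 0 < χ i)
    (hχsum : ∑ i ∈ Finset.Icc 1 (2 * N), χ i = 1)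
    (sr : ℕ → ℕ → ℝ)
    (T : ℕ → ℕ → EuclideanSpace ℝ (Fin q) → EuclideanSpace ℝ (Fin q))
    (J : ℕ → Set (EuclideanSpace ℝ (Fin q)))
    (hTinv : ∀ i ∈ Finset.Icc 1 N, ∀ j ∈ Finset.Icc 1 N, ∀ a b : ℕ,
      (a = i ∨ a = i + N) → (b = j ∨ b = j + N) → 0 < p a b →
      T a b = T i j ∧ sr a b = sr i j)
    (hsim : ∀ i ∈ Finset.Icc 1 N, ∀ j ∈ Finset.Icc 1 N, isSword p N [i, j] →
      0 < sr i j ∧ sr i j < 1 ∧ ∀ x y, dist (T i j x) (T i j y) = sr i j * dist x y)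
    (hJcpt : ∀ i ∈ Finset.Icc 1 N,
      IsCompact (J i) ∧ (J i).Nonempty ∧ closure (interior (J i)) = J i ∧
        Metric.diam (J i) = 1)
    (hJdisj : ∀ i ∈ Finset.Icc 1 N, ∀ j ∈ Finset.Icc 1 N, i ≠ j → Disjoint (J i) (J j))
    (hJplus : ∀ i ∈ Finset.Icc 1 N, J (i + N) = J i)
    (hnest : ∀ i ∈ Finset.Icc 1 N, ∀ j ∈ Finset.Icc 1 N, isSword p N [i, j] →
      T i j '' J j ⊆ J i)
    (hTdisj : ∀ i ∈ Finset.Icc 1 N, ∀ j ∈ Finset.Icc 1 N, ∀ l ∈ Finset.Icc 1 N,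
      isSword p N [i, j] → isSword p N [i, l] → j ≠ l →
      Disjoint (T i j '' J j) (T i l '' J l))
    (hA2 : A2 p N) (hA4 : A4 p N) (hA5 : A5 p N)
    (σ τ : List ℕ) (hσ : isSword p N σ) (hτ : isSword p N τ)
    (hστ : isSword p N (σ ++ τ)) (s : ℝ) (hs : 0 < s) :
    (pMin p N * sMin p sr N ^ r * (chiMax χ N)⁻¹) ^ s *
          Er p χ sr N r σ ^ s * Er p χ sr N r τ ^ s ≤
        Er p χ sr N r (σ ++ τ) ^ s ∧
      Er p χ sr N r (σ ++ τ) ^ s ≤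
        (pMax p N * sMax p sr N ^ r * (chiMin χ N)⁻¹) ^ s *
          Er p χ sr N r σ ^ s * Er p χ sr N r τ ^ s :=
  stmt17_general N q r hr p χ hχpos sr T hsim hA4 σ τ hσ hτ hστ s hs

end MTM

end
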